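/- For every n ≥ 1 and every tree h = (⋯((a,v₁),v₂)⋯,v_i) ∈ H_a^n (so i ≥ 0, v₁,…,v_i ∈ H_b with v₁ ≥ ⋯ ≥ v_i), the Lie-algebra evaluation satisfies X_h = 2^i · γ_b(v₁)⋯γ_b(v_i) · X_a, where γ_b(b) := 1 and γ_b((a,v)) := −(−2)^{|f(v)|_a}·2^{|f(v)|_b} for (a,v) ∈ H_b with v ∈ H_c. -/
import Mathlib


/-! STATEMENT 10: for every `h = (⋯((a,v₁),v₂)⋯,v_i) ∈ H_a^n`,
`X_h = 2^i·γ_b(v₁)⋯γ_b(v_i)·X_a`. -/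

/-- The three-letter alphabet `A = {a, b, c}`. -/
inductive Letter : Type
  | a | b | c
deriving DecidableEq

/-- Words on the alphabet. -/
abbrev Word := List Letter

/-- The free magma `M(A)` on the alphabet: binary complete planar rooted trees
with leaves labelled by letters (fully parenthesized expressions). -/
inductive FM : Type
  | leaf : Letter → FM
  | node : FM → FM → FM
deriving DecidableEq

/-- The foliage map `f : M(A) → A*` (drop all brackets). -/
def fol : FM → Word
  | FM.leaf d => [d]
  | FM.node t t' => fol t ++ fol t'

/-! ### The ordered families of trees `H_b^n`, `H_c^n`

Each level is built as a *sorted list* (increasing with respect to the total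
order of the construction); across levels, trees of higher level (with more
leaves) are *smaller*.  The `H_c`-levels are produced by a single
table-building recursion. -/

/-- Table of the levels `H_c^1, …, H_c^n` (entry `i` is the sorted list of the
trees of `H_c^i`; entry `0` is empty).

* `H_c^1 = {c}`.
* For `m = 2k` even, `H_c^m = ⋃_{i=1}^{k} {(v,w) : v ∈ H_b^i, w ∈ H_c^{m−i}}`,
  ordered lexicographically (`(v,w) < (v′,w′)` iff `v < v′`, or `v = v′` and
  `w < w′`; `v`'s with more leaves are smaller, so the blocks appear for
  `i = k, k−1, …, 1`), where `H_b^1 = {b}` and `H_b^i = {(a,v′) : v′ ∈ H_c^{i−1}}`.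
* For `m = 2k+1` odd, additionally the block
  `E_k = {((a,v),w) : v, w ∈ H_c^k, v ≥ w}` is prepended (its elements are
  smaller than all other elements of `H_c^m`), ordered lexicographically in
  `(v,w)`. -/
def HClevels : ℕ → List (List FM)
  | 0 => [[]]
  | n + 1 =>
    let t := HClevels n
    let C : ℕ → List FM := fun i => t.getD i []
    let m := n + 1
    let k := m / 2
    let prods : List FM :=
      (List.range k).flatMap (fun j =>
        let i := k - j
        if i = 1 then
          (C (m - 1)).map (fun w => FM.node (FM.leaf Letter.b) w)
        else
          (C (i - 1)).flatMap (fun v =>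
            (C (m - i)).map (fun w =>
              FM.node (FM.node (FM.leaf Letter.a) v) w)))
    let Ck := C k
    let Ek : List FM :=
      (List.range Ck.length).flatMap (fun r =>
        (List.range (r + 1)).map (fun s =>
          FM.node (FM.node (FM.leaf Letter.a) (Ck.getD r (FM.leaf Letter.a)))
            (Ck.getD s (FM.leaf Letter.a))))
    let Cm : List FM :=
      if m = 1 then [FM.leaf Letter.c]
      else if m % 2 = 0 then prods
      else Ek ++ prods
    t ++ [Cm]

/-- The level `H_c^n`, as a sorted (increasing) list of trees. -/
def HCn (n : ℕ) : List FM := (HClevels n).getD n []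

/-- The level `H_b^n`, as a sorted (increasing) list of trees:
`H_b^1 = {b}` and `H_b^n = {(a,v) : v ∈ H_c^{n−1}}` with the inherited order. -/
def HBn : ℕ → List FM
  | 0 => []
  | 1 => [FM.leaf Letter.b]
  | n + 2 => (HCn (n + 1)).map (fun v => FM.node (FM.leaf Letter.a) v)

/-- The level (number of leaves) of a tree. -/
def lev (h : FM) : ℕ := (fol h).length

/-- Position of a tree inside its level `H_c^{lev h}`. -/
def cIdx (h : FM) : ℕ := (HCn (lev h)).findIdx (fun x => decide (x = h))

/-- Position of a tree inside its level `H_b^{lev h}`. -/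
def bIdx (h : FM) : ℕ := (HBn (lev h)).findIdx (fun x => decide (x = h))

/-- The strict total order on `H_c = ⋃_n H_c^n`: trees of higher level are
smaller, trees of the same level are compared by position in the sorted level. -/
def cLt (v w : FM) : Prop := lev w < lev v ∨ (lev v = lev w ∧ cIdx v < cIdx w)

/-- `v ≤ w` in `H_c`. -/
def cLe (v w : FM) : Prop := cLt v w ∨ v = w

/-- The strict total order on `H_b = ⋃_n H_b^n`: trees of higher level are
smaller, trees of the same level are compared by position in the sorted level. -/
def bLt (v w : FM) : Prop := lev w < lev v ∨ (lev v = lev w ∧ bIdx v < bIdx w)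

/-- `v ≤ w` in `H_b`. -/
def bLe (v w : FM) : Prop := bLt v w ∨ v = w

/-- The evaluation `M(A) → L`, `t ↦ X_t`, extending `d ↦ X_d` by
`X_{(t,t′)} = ⁅X_t, X_{t′}⁆`. -/
def Xev {L : Type*} [LieRing L] [LieAlgebra ℝ L] (X : Letter → L) : FM → L
  | FM.leaf d => X d
  | FM.node t t' => ⁅Xev X t, Xev X t'⁆

/-- `γ_b : H_b → ℤ`: `γ_b(b) = 1` and `γ_b((a,v)) = −(−2)^{|f(v)|_a}·2^{|f(v)|_b}`. -/
def gammaBt : FM → ℤ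
  | FM.node (FM.leaf Letter.a) v =>
      -((-2 : ℤ) ^ ((fol v).count Letter.a) * (2 : ℤ) ^ ((fol v).count Letter.b))
  | _ => 1

/-! ### Auxiliary lemmas -/

/-- The body of the `HClevels` recursion: the new level built from a table `t`. -/
def CmOf (t : List (List FM)) (n : ℕ) : List FM :=
  let C : ℕ → List FM := fun i => t.getD i []
  let m := n + 1
  let k := m / 2
  let prods : List FM :=
    (List.range k).flatMap (fun j =>
      let i := k - j
      if i = 1 then
        (C (m - 1)).map (fun w => FM.node (FM.leaf Letter.b) w)
      else
        (C (i - 1)).flatMap (fun v =>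
          (C (m - i)).map (fun w =>
            FM.node (FM.node (FM.leaf Letter.a) v) w)))
  let Ck := C k
  let Ek : List FM :=
    (List.range Ck.length).flatMap (fun r =>
      (List.range (r + 1)).map (fun s =>
        FM.node (FM.node (FM.leaf Letter.a) (Ck.getD r (FM.leaf Letter.a)))
          (Ck.getD s (FM.leaf Letter.a))))
  if m = 1 then [FM.leaf Letter.c]
  else if m % 2 = 0 then prods
  else Ek ++ prods

lemma HClevels_succ (n : ℕ) :
    HClevels (n + 1) = HClevels n ++ [CmOf (HClevels n) n] := rfl

lemma HClevels_length (n : ℕ) : (HClevels n).length = n + 1 := by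
  induction n with
  | zero => rfl
  | succ n ih => rw [HClevels_succ]; simp [ih]

lemma HClevels_getD : ∀ n i, i ≤ n → (HClevels n).getD i [] = HCn i := by
  intro n
  induction n with
  | zero =>
    intro i hi
    interval_cases i
    rfl
  | succ n ih =>
    intro i hi
    rcases Nat.lt_or_ge i (n + 1) with h | h
    · rw [HClevels_succ, List.getD_append _ _ _ _ (by rw [HClevels_length]; omega)]
      exact ih i (by omega)
    · have : i = n + 1 := by omega
      subst this
      rfl

lemma HCn_succ (n : ℕ) : HCn (n + 1) = CmOf (HClevels n) n := by
  show (HClevels (n + 1)).getD (n + 1) [] = _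
  rw [HClevels_succ, List.getD_append_right _ _ _ _ (by rw [HClevels_length])]
  simp [HClevels_length]

/-- Membership decomposition for `H_c`-levels. -/
lemma mem_HCn_cases : ∀ {n : ℕ} {v : FM}, v ∈ HCn n →
    v = FM.leaf Letter.c ∨
    (∃ w, (∃ m, w ∈ HCn m) ∧ v = FM.node (FM.leaf Letter.b) w) ∨
    (∃ v' w, (∃ m, v' ∈ HCn m) ∧ (∃ m, w ∈ HCn m) ∧
      v = FM.node (FM.node (FM.leaf Letter.a) v') w) := by
  intro n v hv
  match n with
  | 0 => simp [HCn, HClevels] at hv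
  | n + 1 =>
    rw [HCn_succ] at hv
    simp only [CmOf] at hv
    have hprods : v ∈ (List.range ((n+1)/2)).flatMap (fun j =>
        if (n+1)/2 - j = 1 then
          ((HClevels n).getD (n + 1 - 1) []).map (fun w => FM.node (FM.leaf Letter.b) w)
        else
          ((HClevels n).getD ((n+1)/2 - j - 1) []).flatMap (fun v =>
            (((HClevels n).getD (n + 1 - ((n+1)/2 - j)) []).map (fun w =>
              FM.node (FM.node (FM.leaf Letter.a) v) w)))) →
        (∃ w, (∃ m, w ∈ HCn m) ∧ v = FM.node (FM.leaf Letter.b) w) ∨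
        (∃ v' w, (∃ m, v' ∈ HCn m) ∧ (∃ m, w ∈ HCn m) ∧
          v = FM.node (FM.node (FM.leaf Letter.a) v') w) := by
      intro hp
      simp only [List.mem_flatMap, List.mem_range] at hp
      obtain ⟨j, hj, hp⟩ := hp
      by_cases h1 : (n+1)/2 - j = 1
      · rw [if_pos h1] at hp
        simp only [List.mem_map] at hp
        obtain ⟨w, hw, rfl⟩ := hp
        rw [HClevels_getD n (n + 1 - 1) (by omega)] at hw
        exact Or.inl ⟨w, ⟨_, hw⟩, rfl⟩
      · rw [if_neg h1] at hp
        simp only [List.mem_flatMap, List.mem_map] at hp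
        obtain ⟨v', hv', w, hw, rfl⟩ := hp
        rw [HClevels_getD n ((n+1)/2 - j - 1) (by omega)] at hv'
        rw [HClevels_getD n (n + 1 - ((n+1)/2 - j)) (by omega)] at hw
        exact Or.inr ⟨v', w, ⟨_, hv'⟩, ⟨_, hw⟩, rfl⟩
    split_ifs at hv with h1 h2
    · left; simpa using hv
    · exact Or.inr (hprods hv)
    · rcases List.mem_append.mp hv with hv | hv
      · -- the `E_k` block
        right; right
        simp only [List.mem_flatMap, List.mem_range, List.mem_map] at hv
        obtain ⟨r, hr, s, hs, rfl⟩ := hv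
        have hC : (HClevels n).getD ((n+1)/2) [] = HCn ((n+1)/2) :=
          HClevels_getD n _ (by omega)
        rw [hC] at hr
        refine ⟨_, _, ⟨(n+1)/2, ?_⟩, ⟨(n+1)/2, ?_⟩, rfl⟩
        · rw [hC, List.getD_eq_getElem _ _ hr]
          exact List.getElem_mem _
        · rw [hC, List.getD_eq_getElem _ _ (by omega : s < (HCn ((n+1)/2)).length)]
          exact List.getElem_mem _
      · exact Or.inr (hprods hv)

/-- In `H_c`, every tree evaluates to a multiple of `X_c`. -/
lemma Xev_HC {L : Type*} [LieRing L] [LieAlgebra ℝ L] (X : Letter → L)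
    (hac : ⁅X Letter.a, X Letter.c⁆ = -X Letter.b)
    (hbc : ⁅X Letter.b, X Letter.c⁆ = (2 : ℝ) • X Letter.c) :
    ∀ v : FM, (∃ n, v ∈ HCn n) →
      Xev X v = ((-2 : ℝ) ^ ((fol v).count Letter.a) *
        (2 : ℝ) ^ ((fol v).count Letter.b)) • X Letter.c := by
  suffices H : ∀ N : ℕ, ∀ v : FM, sizeOf v ≤ N → (∃ n, v ∈ HCn n) →
      Xev X v = ((-2 : ℝ) ^ ((fol v).count Letter.a) *
        (2 : ℝ) ^ ((fol v).count Letter.b)) • X Letter.c by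
    exact fun v hv => H (sizeOf v) v le_rfl hv
  intro N
  induction N with
  | zero =>
    intro v hsz _
    exfalso
    cases v <;> simp at hsz
  | succ N ih =>
    intro v hsz hv
    obtain ⟨n, hvn⟩ := hv
    rcases mem_HCn_cases hvn with rfl | ⟨w, hw, rfl⟩ | ⟨v', w, hv', hw, rfl⟩
    · simp [Xev, fol]
    · have hszw : sizeOf w ≤ N := by simp at hsz; omega
      rw [show Xev X (FM.node (FM.leaf Letter.b) w) = ⁅X Letter.b, Xev X w⁆ from rfl,
        ih w hszw hw, lie_smul, hbc, smul_smul]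
      rw [show fol (FM.node (FM.leaf Letter.b) w) = Letter.b :: fol w from rfl,
        List.count_cons_of_ne (by decide), List.count_cons_self, pow_succ]
      module
    · have hszv : sizeOf v' ≤ N := by simp at hsz; omega
      have hszw : sizeOf w ≤ N := by simp at hsz; omega
      rw [show Xev X (FM.node (FM.node (FM.leaf Letter.a) v') w)
            = ⁅⁅X Letter.a, Xev X v'⁆, Xev X w⁆ from rfl,
        ih v' hszv hv', ih w hszw hw, lie_smul, lie_smul, smul_lie, hac, neg_lie, hbc,
        show fol (FM.node (FM.node (FM.leaf Letter.a) v') w)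
            = Letter.a :: (fol v' ++ fol w) from rfl,
        List.count_cons_self, List.count_cons_of_ne (by decide),
        List.count_append, List.count_append, pow_succ, pow_add, pow_add]
      module

/-- In `H_b`, bracketing with `X_a` gives `2·γ_b` times `X_a`. -/
lemma Xev_HB {L : Type*} [LieRing L] [LieAlgebra ℝ L] (X : Letter → L)
    (hab : ⁅X Letter.a, X Letter.b⁆ = (2 : ℝ) • X Letter.a)
    (hac : ⁅X Letter.a, X Letter.c⁆ = -X Letter.b)
    (hbc : ⁅X Letter.b, X Letter.c⁆ = (2 : ℝ) • X Letter.c) :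
    ∀ v : FM, (∃ m, v ∈ HBn m) →
      ⁅X Letter.a, Xev X v⁆ = ((2 : ℝ) * (gammaBt v : ℝ)) • X Letter.a := by
  rintro v ⟨m, hm⟩
  match m with
  | 0 => simp [HBn] at hm
  | 1 =>
    simp only [HBn, List.mem_singleton] at hm
    subst hm
    rw [show Xev X (FM.leaf Letter.b) = X Letter.b from rfl, hab,
      show gammaBt (FM.leaf Letter.b) = 1 from rfl]
    norm_num
  | m + 2 =>
    simp only [HBn, List.mem_map] at hm
    obtain ⟨w, hw, rfl⟩ := hm
    rw [show Xev X (FM.node (FM.leaf Letter.a) w) = ⁅X Letter.a, Xev X w⁆ from rfl,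
      Xev_HC X hac hbc w ⟨_, hw⟩, lie_smul, hac, lie_smul, lie_neg, hab,
      show gammaBt (FM.node (FM.leaf Letter.a) w)
        = -((-2 : ℤ) ^ ((fol w).count Letter.a) * (2 : ℤ) ^ ((fol w).count Letter.b))
        from rfl]
    push_cast
    module

lemma main_aux {L : Type*} [LieRing L] [LieAlgebra ℝ L] (X : Letter → L)
    (hab : ⁅X Letter.a, X Letter.b⁆ = (2 : ℝ) • X Letter.a)
    (hac : ⁅X Letter.a, X Letter.c⁆ = -X Letter.b)
    (hbc : ⁅X Letter.b, X Letter.c⁆ = (2 : ℝ) • X Letter.c) :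
    ∀ l : List FM, (∀ v ∈ l, ∃ m : ℕ, v ∈ HBn m) →
      Xev X (l.foldl FM.node (FM.leaf Letter.a)) =
        ((2 : ℝ) ^ l.length * (l.map (fun v => (gammaBt v : ℝ))).prod) • X Letter.a := by
  intro l
  induction l using List.reverseRecOn with
  | nil => intro _; simp [Xev]
  | append_singleton l v ihl =>
    intro hmem
    rw [List.foldl_append, List.foldl_cons, List.foldl_nil]
    rw [show Xev X (FM.node (l.foldl FM.node (FM.leaf Letter.a)) v)
          = ⁅Xev X (l.foldl FM.node (FM.leaf Letter.a)), Xev X v⁆ from rfl,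
      ihl (fun w hw => hmem w (by simp [hw])), smul_lie,
      Xev_HB X hab hac hbc v (hmem v (by simp)), smul_smul]
    simp only [List.map_append, List.prod_append, List.length_append, List.map_cons,
      List.map_nil, List.prod_cons, List.prod_nil, List.length_cons, List.length_nil]
    rw [pow_succ]
    ring_nf

/-- In a real Lie algebra with `⁅X_a,X_b⁆ = 2X_a`, `⁅X_a,X_c⁆ = −X_b`,
`⁅X_b,X_c⁆ = 2X_c`: for every `n ≥ 1` and every element of `H_a^n`, i.e. every
tree of the form `h = (⋯((a,v₁),v₂)⋯,v_i)` (encoded as the left-fold of `node`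
over the list `[v₁, …, v_i]`) with `i ≥ 0`, all `v_j ∈ H_b`, `v₁ ≥ ⋯ ≥ v_i`,
and `n` leaves in total, one has `X_h = 2^i·γ_b(v₁)⋯γ_b(v_i)·X_a`. -/
theorem Xev_mem_HAn {L : Type*} [LieRing L] [LieAlgebra ℝ L] (X : Letter → L)
    (hab : ⁅X Letter.a, X Letter.b⁆ = (2 : ℝ) • X Letter.a)
    (hac : ⁅X Letter.a, X Letter.c⁆ = -X Letter.b)
    (hbc : ⁅X Letter.b, X Letter.c⁆ = (2 : ℝ) • X Letter.c) :
    ∀ n : ℕ, 1 ≤ n → ∀ l : List FM,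
      (∀ v ∈ l, ∃ m : ℕ, v ∈ HBn m) →
      List.Chain' (fun v w => bLe w v) l →
      lev (l.foldl FM.node (FM.leaf Letter.a)) = n →
      Xev X (l.foldl FM.node (FM.leaf Letter.a)) =
        ((2 : ℝ) ^ l.length * (l.map (fun v => (gammaBt v : ℝ))).prod) • X Letter.a :=
  fun _ _ l hmem _ _ => main_aux X hab hac hbc l hmem
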